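/- arXiv:1109.0871 — 3 statements merged into one kernel-verified Lean document; each statement's English description precedes it below -/
import Mathlib

section
/- Let γ > 1. For smooth positive functions ρ̄(t,x), ū(t,x) solving the isentropic Euler system ρ̄_t + (ρ̄ū)_x = 0, (ρ̄ū)_t + (ρ̄ū² + ρ̄^γ)_x = 0, and smooth functions ρ > 0, u solving ρ_t + (ρu)_x = 0, the function ρΨ(ρ,ρ̄) with Ψ(ρ,ρ̄) = ∫_{ρ̄}^{ρ}(s^γ - ρ̄^γ)/s² ds satisfies the identity (ρΨ(ρ,ρ̄))_t + (ρuΨ(ρ,ρ̄))_x + (u-ū)_x(ρ^γ - ρ̄^γ) + ū_x(ρ^γ - ρ̄^γ - γρ̄^{γ-1}(ρ-ρ̄)) = -((ρ̄^γ)_x/ρ̄)(ρ-ρ̄)(u-ū). -/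
/-- Partial derivative in time of a function of `(t,x)`. -/
noncomputable def pderivT (f : ℝ → ℝ → ℝ) (t x : ℝ) : ℝ := deriv (fun τ => f τ x) t

/-- Partial derivative in space of a function of `(t,x)`. -/
noncomputable def pderivX (f : ℝ → ℝ → ℝ) (t x : ℝ) : ℝ := deriv (fun y => f t y) x

lemma hasDerivAt_pT (f : ℝ → ℝ → ℝ) (hf : ContDiff ℝ (⊤ : ℕ∞) (Function.uncurry f)) (t x : ℝ) :
    HasDerivAt (fun τ => f τ x) (pderivT f t x) t := by
  have hd : DifferentiableAt ℝ (fun τ => f τ x) t := by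
    exact ((hf.differentiable (by simp)) (t, x)).comp t
      (differentiableAt_id.prodMk (differentiableAt_const x) : DifferentiableAt ℝ (fun τ : ℝ => (τ, x)) t)
  unfold pderivT
  exact hd.hasDerivAt

lemma hasDerivAt_pX (f : ℝ → ℝ → ℝ) (hf : ContDiff ℝ (⊤ : ℕ∞) (Function.uncurry f)) (t x : ℝ) :
    HasDerivAt (fun y => f t y) (pderivX f t x) x := by
  have hd : DifferentiableAt ℝ (fun y => f t y) x := by
    exact ((hf.differentiable (by simp)) (t, x)).comp x
      ((differentiableAt_const t).prodMk differentiableAt_id)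
  unfold pderivX
  exact hd.hasDerivAt

/-- Relative entropy identity (3.7): for smooth positive solutions `(ρ̄,ū)` of the isentropic
Euler system and a smooth positive `(ρ,u)` satisfying the continuity equation,
`(ρΨ)_t + (ρuΨ)_x + (u-ū)_x(ρ^γ - ρ̄^γ) + ū_x(ρ^γ - ρ̄^γ - γρ̄^{γ-1}(ρ-ρ̄))
  = -((ρ̄^γ)_x/ρ̄)(ρ-ρ̄)(u-ū)`. -/
theorem stmt_10 (γ : ℝ) (hγ : 1 < γ) (ρ u ρb ub : ℝ → ℝ → ℝ)
    (hρ : ContDiff ℝ (⊤ : ℕ∞) (Function.uncurry ρ)) (hu : ContDiff ℝ (⊤ : ℕ∞) (Function.uncurry u))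
    (hρb : ContDiff ℝ (⊤ : ℕ∞) (Function.uncurry ρb)) (hub : ContDiff ℝ (⊤ : ℕ∞) (Function.uncurry ub))
    (hρpos : ∀ t x, 0 < ρ t x) (hρbpos : ∀ t x, 0 < ρb t x)
    (heuler1 : ∀ t x, pderivT ρb t x + pderivX (fun t x => ρb t x * ub t x) t x = 0)
    (heuler2 : ∀ t x, pderivT (fun t x => ρb t x * ub t x) t x +
      pderivX (fun t x => ρb t x * (ub t x) ^ 2 + (ρb t x) ^ γ) t x = 0)
    (hcont : ∀ t x, pderivT ρ t x + pderivX (fun t x => ρ t x * u t x) t x = 0) :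
    ∀ t x,
      pderivT (fun t x => ρ t x *
          ((1 / ((γ - 1) * ρ t x)) *
            ((ρ t x) ^ γ - (ρb t x) ^ γ - γ * (ρb t x) ^ (γ - 1) * (ρ t x - ρb t x)))) t x +
        pderivX (fun t x => ρ t x * u t x *
          ((1 / ((γ - 1) * ρ t x)) *
            ((ρ t x) ^ γ - (ρb t x) ^ γ - γ * (ρb t x) ^ (γ - 1) * (ρ t x - ρb t x)))) t x +
        pderivX (fun t x => u t x - ub t x) t x * ((ρ t x) ^ γ - (ρb t x) ^ γ) +
        pderivX ub t x *
          ((ρ t x) ^ γ - (ρb t x) ^ γ - γ * (ρb t x) ^ (γ - 1) * (ρ t x - ρb t x)) =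
      -(pderivX (fun t x => (ρb t x) ^ γ) t x / ρb t x) *
          (ρ t x - ρb t x) * (u t x - ub t x) := by
  intro t x
  have hγ1 : γ - 1 ≠ 0 := sub_ne_zero.mpr (ne_of_gt hγ)
  have hane : ∀ s y, ρ s y ≠ 0 := fun s y => (hρpos s y).ne'
  have hbne : ∀ s y, ρb s y ≠ 0 := fun s y => (hρbpos s y).ne'
  -- simplify the two composite functions
  have e1 : (fun t x => ρ t x *
          ((1 / ((γ - 1) * ρ t x)) *
            ((ρ t x) ^ γ - (ρb t x) ^ γ - γ * (ρb t x) ^ (γ - 1) * (ρ t x - ρb t x)))) =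
      (fun t x => (γ - 1)⁻¹ *
            ((ρ t x) ^ γ - (ρb t x) ^ γ - γ * (ρb t x) ^ (γ - 1) * (ρ t x - ρb t x))) := by
    funext s y
    field_simp [hane s y]
  have e2 : (fun t x => ρ t x * u t x *
          ((1 / ((γ - 1) * ρ t x)) *
            ((ρ t x) ^ γ - (ρb t x) ^ γ - γ * (ρb t x) ^ (γ - 1) * (ρ t x - ρb t x)))) =
      (fun t x => (γ - 1)⁻¹ * (u t x *
            ((ρ t x) ^ γ - (ρb t x) ^ γ - γ * (ρb t x) ^ (γ - 1) * (ρ t x - ρb t x)))) := by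
    funext s y
    field_simp [hane s y]
  rw [e1, e2]
  -- basic partial derivatives
  have haT := hasDerivAt_pT ρ hρ t x
  have haX := hasDerivAt_pX ρ hρ t x
  have hvX := hasDerivAt_pX u hu t x
  have hbT := hasDerivAt_pT ρb hρb t x
  have hbX := hasDerivAt_pX ρb hρb t x
  have hwX := hasDerivAt_pX ub hub t x
  set a := ρ t x with ha_def
  set b := ρb t x with hb_def
  set v := u t x with hv_def
  set w := ub t x with hw_def
  set at' := pderivT ρ t x
  set ax := pderivX ρ t x
  set vx := pderivX u t x
  set bt := pderivT ρb t x
  set bx := pderivX ρb t x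
  set wx := pderivX ub t x
  -- derivative of E in time
  have hagT := haT.rpow_const (p := γ) (Or.inl (hane t x))
  have hbgT := hbT.rpow_const (p := γ) (Or.inl (hbne t x))
  have hbg1T := hbT.rpow_const (p := γ - 1) (Or.inl (hbne t x))
  have hET : HasDerivAt (fun τ => (ρ τ x) ^ γ - (ρb τ x) ^ γ -
      γ * (ρb τ x) ^ (γ - 1) * (ρ τ x - ρb τ x))
      (at' * γ * a ^ (γ - 1) - bt * γ * b ^ (γ - 1) -
        (γ * (bt * (γ - 1) * b ^ (γ - 1 - 1)) * (a - b) +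
          γ * b ^ (γ - 1) * (at' - bt))) t := by
    exact (hagT.sub hbgT).sub
      (((hbg1T.const_mul γ).mul (haT.sub hbT)).congr_deriv (by simp only [Pi.sub_apply, ← ha_def, ← hb_def]))
  -- derivative of E in space
  have hagX := haX.rpow_const (p := γ) (Or.inl (hane t x))
  have hbgX := hbX.rpow_const (p := γ) (Or.inl (hbne t x))
  have hbg1X := hbX.rpow_const (p := γ - 1) (Or.inl (hbne t x))
  have hEX : HasDerivAt (fun y => (ρ t y) ^ γ - (ρb t y) ^ γ -
      γ * (ρb t y) ^ (γ - 1) * (ρ t y - ρb t y))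
      (ax * γ * a ^ (γ - 1) - bx * γ * b ^ (γ - 1) -
        (γ * (bx * (γ - 1) * b ^ (γ - 1 - 1)) * (a - b) +
          γ * b ^ (γ - 1) * (ax - bx))) x := by
    exact (hagX.sub hbgX).sub
      (((hbg1X.const_mul γ).mul (haX.sub hbX)).congr_deriv (by simp only [Pi.sub_apply, ← ha_def, ← hb_def]))
  -- rewrite each pderiv term in the goal
  have T1 : pderivT (fun t x => (γ - 1)⁻¹ *
      ((ρ t x) ^ γ - (ρb t x) ^ γ - γ * (ρb t x) ^ (γ - 1) * (ρ t x - ρb t x))) t x =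
      (γ - 1)⁻¹ * (at' * γ * a ^ (γ - 1) - bt * γ * b ^ (γ - 1) -
        (γ * (bt * (γ - 1) * b ^ (γ - 1 - 1)) * (a - b) +
          γ * b ^ (γ - 1) * (at' - bt))) := (hET.const_mul _).deriv
  have T2 : pderivX (fun t x => (γ - 1)⁻¹ * (u t x *
      ((ρ t x) ^ γ - (ρb t x) ^ γ - γ * (ρb t x) ^ (γ - 1) * (ρ t x - ρb t x)))) t x =
      (γ - 1)⁻¹ * (vx * ((a) ^ γ - (b) ^ γ - γ * (b) ^ (γ - 1) * (a - b)) +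
        v * (ax * γ * a ^ (γ - 1) - bx * γ * b ^ (γ - 1) -
        (γ * (bx * (γ - 1) * b ^ (γ - 1 - 1)) * (a - b) +
          γ * b ^ (γ - 1) * (ax - bx)))) := ((hvX.mul hEX).const_mul _).deriv
  have T3 : pderivX (fun t x => u t x - ub t x) t x = vx - wx := (hvX.sub hwX).deriv
  have T4 : pderivX (fun t x => (ρb t x) ^ γ) t x = bx * γ * b ^ (γ - 1) := hbgX.deriv
  -- PDE hypotheses in derivative form
  have hc := hcont t x
  rw [show pderivX (fun t x => ρ t x * u t x) t x = ax * v + a * vx from (haX.mul hvX).deriv]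
    at hc
  have he1 := heuler1 t x
  rw [show pderivX (fun t x => ρb t x * ub t x) t x = bx * w + b * wx from (hbX.mul hwX).deriv]
    at he1
  rw [T1, T2, T3, T4]
  -- rpow relations
  have hra : a ^ γ = a ^ (γ - 1) * a := by
    rw [← Real.rpow_add_one (hane t x) (γ - 1), sub_add_cancel]
  have hrb : b ^ γ = b ^ (γ - 1) * b := by
    rw [← Real.rpow_add_one (hbne t x) (γ - 1), sub_add_cancel]
  have hrb1 : b ^ (γ - 1) = b ^ (γ - 1 - 1) * b := by
    rw [← Real.rpow_add_one (hbne t x) (γ - 1 - 1), sub_add_cancel]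
  have hat : at' = -(ax * v + a * vx) := by linarith
  have hbt : bt = -(bx * w + b * wx) := by linarith
  rw [hat, hbt, hra, hrb, hrb1]
  generalize a ^ (γ - 1) = A1
  generalize b ^ (γ - 1 - 1) = B2
  have hb0 : b ≠ 0 := hbne t x
  field_simp [hb0]
  ring
end

section
/- Let γ > 1, α > 0, and let ρ, ρ̄ be smooth positive functions of x. Then ρ^{α-2} ρ_x (γρ^{γ-1}ρ_x - (ρ/ρ̄)·γρ̄^{γ-1}ρ̄_x) = (4γ/(α+γ-1)²)·((ρ^{(α+γ-1)/2} - ρ̄^{(α+γ-1)/2})_x)² + ∂_x[ (8γ/(α+γ-1)²)(ρ̄^{(α+γ-1)/2})_x(ρ^{(α+γ-1)/2} - ρ̄^{(α+γ-1)/2}) - (2γ/(α(α+γ-1)))(ρ̄^{(α+γ-1)/2})_x ρ̄^{(γ-α-1)/2}(ρ^α - ρ̄^α) ] - (8γ/(α+γ-1)²)(ρ̄^{(α+γ-1)/2})_{xx}(ρ^{(α+γ-1)/2} - ρ̄^{(α+γ-1)/2}) + (2γ/(α(α+γ-1)))·∂_x[(ρ̄^{(α+γ-1)/2})_x ρ̄^{(γ-α-1)/2}]·(ρ^α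 - ρ̄^α). -/
set_option maxHeartbeats 1200000 in
/-- Identity (3.19): for smooth positive `ρ, ρ̄` of `x`, with `b = (α+γ-1)/2`,
`ρ^{α-2} ρ_x (p(ρ)_x - ρ p(ρ̄)_x/ρ̄)` decomposes into a square term, an exact derivative and
lower-order terms. -/
theorem stmt_12 (γ α : ℝ) (hγ : 1 < γ) (hα : 0 < α) (hαγ : α + γ ≠ 1)
    (ρ ρb : ℝ → ℝ) (hρ : ContDiff ℝ (⊤ : ℕ∞) ρ) (hρb : ContDiff ℝ (⊤ : ℕ∞) ρb)
    (hρpos : ∀ x, 0 < ρ x) (hρbpos : ∀ x, 0 < ρb x) :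
    ∀ x : ℝ,
      (ρ x) ^ (α - 2) * deriv ρ x *
          (γ * (ρ x) ^ (γ - 1) * deriv ρ x - (ρ x / ρb x) * (γ * (ρb x) ^ (γ - 1) * deriv ρb x)) =
        (4 * γ / (α + γ - 1) ^ 2) *
            (deriv (fun y => (ρ y) ^ ((α + γ - 1) / 2) - (ρb y) ^ ((α + γ - 1) / 2)) x) ^ 2 +
          deriv (fun y =>
            (8 * γ / (α + γ - 1) ^ 2) * deriv (fun z => (ρb z) ^ ((α + γ - 1) / 2)) y *
                ((ρ y) ^ ((α + γ - 1) / 2) - (ρb y) ^ ((α + γ - 1) / 2)) -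
              (2 * γ / (α * (α + γ - 1))) * deriv (fun z => (ρb z) ^ ((α + γ - 1) / 2)) y *
                (ρb y) ^ ((γ - α - 1) / 2) * ((ρ y) ^ α - (ρb y) ^ α)) x -
          (8 * γ / (α + γ - 1) ^ 2) *
            deriv (deriv (fun z => (ρb z) ^ ((α + γ - 1) / 2))) x *
            ((ρ x) ^ ((α + γ - 1) / 2) - (ρb x) ^ ((α + γ - 1) / 2)) +
          (2 * γ / (α * (α + γ - 1))) *
            deriv (fun y => deriv (fun z => (ρb z) ^ ((α + γ - 1) / 2)) y *
              (ρb y) ^ ((γ - α - 1) / 2)) x *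
            ((ρ x) ^ α - (ρb x) ^ α) := by
  intro x
  have hρd : Differentiable ℝ ρ := hρ.differentiable (by simp)
  have hρbd : Differentiable ℝ ρb := hρb.differentiable (by simp)
  have hbinf : ContDiff ℝ ((⊤:ℕ∞):WithTop ℕ∞) ρb := hρb.of_le (by simp)
  have hρb2 : Differentiable ℝ (deriv ρb) :=
    ((contDiff_infty_iff_deriv.mp hbinf).2).differentiable (by simp)
  have hAne : ∀ y, ρ y ≠ 0 := fun y => (hρpos y).ne'
  have hBne : ∀ y, ρb y ≠ 0 := fun y => (hρbpos y).ne'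
  -- first derivatives of powers
  have hGeq : deriv (fun z => (ρb z) ^ ((α + γ - 1) / 2))
      = fun y => deriv ρb y * ((α + γ - 1) / 2) * (ρb y) ^ ((α + γ - 1) / 2 - 1) := by
    funext y
    exact (((hρbd y).hasDerivAt).rpow_const (Or.inl (hBne y))).deriv
  have hA : HasDerivAt ρ (deriv ρ x) x := (hρd x).hasDerivAt
  have hB : HasDerivAt ρb (deriv ρb x) x := (hρbd x).hasDerivAt
  have hB' : HasDerivAt (deriv ρb) (deriv (deriv ρb) x) x := (hρb2 x).hasDerivAt
  have hAb : HasDerivAt (fun y => (ρ y) ^ ((α + γ - 1) / 2))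
      (deriv ρ x * ((α + γ - 1) / 2) * (ρ x) ^ ((α + γ - 1) / 2 - 1)) x :=
    hA.rpow_const (Or.inl (hAne x))
  have hBb : HasDerivAt (fun y => (ρb y) ^ ((α + γ - 1) / 2))
      (deriv ρb x * ((α + γ - 1) / 2) * (ρb x) ^ ((α + γ - 1) / 2 - 1)) x :=
    hB.rpow_const (Or.inl (hBne x))
  have hBb1 : HasDerivAt (fun y => (ρb y) ^ ((α + γ - 1) / 2 - 1))
      (deriv ρb x * ((α + γ - 1) / 2 - 1) * (ρb x) ^ ((α + γ - 1) / 2 - 1 - 1)) x :=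
    hB.rpow_const (Or.inl (hBne x))
  have hBd : HasDerivAt (fun y => (ρb y) ^ ((γ - α - 1) / 2))
      (deriv ρb x * ((γ - α - 1) / 2) * (ρb x) ^ ((γ - α - 1) / 2 - 1)) x :=
    hB.rpow_const (Or.inl (hBne x))
  have hAα : HasDerivAt (fun y => (ρ y) ^ α)
      (deriv ρ x * α * (ρ x) ^ (α - 1)) x := hA.rpow_const (Or.inl (hAne x))
  have hBα : HasDerivAt (fun y => (ρb y) ^ α)
      (deriv ρb x * α * (ρb x) ^ (α - 1)) x := hB.rpow_const (Or.inl (hBne x))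
  -- G and its derivative
  have hG : HasDerivAt (fun y => deriv ρb y * ((α + γ - 1) / 2) * (ρb y) ^ ((α + γ - 1) / 2 - 1))
      (deriv (deriv ρb) x * ((α + γ - 1) / 2) * (ρb x) ^ ((α + γ - 1) / 2 - 1)
        + deriv ρb x * ((α + γ - 1) / 2) *
          (deriv ρb x * ((α + γ - 1) / 2 - 1) * (ρb x) ^ ((α + γ - 1) / 2 - 1 - 1))) x :=
    (hB'.mul_const _).mul hBb1
  have hF : HasDerivAt (fun y =>
      (8 * γ / (α + γ - 1) ^ 2) *
          (deriv ρb y * ((α + γ - 1) / 2) * (ρb y) ^ ((α + γ - 1) / 2 - 1)) *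
          ((ρ y) ^ ((α + γ - 1) / 2) - (ρb y) ^ ((α + γ - 1) / 2)) -
        (2 * γ / (α * (α + γ - 1))) *
          (deriv ρb y * ((α + γ - 1) / 2) * (ρb y) ^ ((α + γ - 1) / 2 - 1)) *
          (ρb y) ^ ((γ - α - 1) / 2) * ((ρ y) ^ α - (ρb y) ^ α))
      ((8 * γ / (α + γ - 1) ^ 2) *
          (deriv (deriv ρb) x * ((α + γ - 1) / 2) * (ρb x) ^ ((α + γ - 1) / 2 - 1)
            + deriv ρb x * ((α + γ - 1) / 2) *
              (deriv ρb x * ((α + γ - 1) / 2 - 1) * (ρb x) ^ ((α + γ - 1) / 2 - 1 - 1))) *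
          ((ρ x) ^ ((α + γ - 1) / 2) - (ρb x) ^ ((α + γ - 1) / 2))
        + (8 * γ / (α + γ - 1) ^ 2) *
          (deriv ρb x * ((α + γ - 1) / 2) * (ρb x) ^ ((α + γ - 1) / 2 - 1)) *
          (deriv ρ x * ((α + γ - 1) / 2) * (ρ x) ^ ((α + γ - 1) / 2 - 1)
            - deriv ρb x * ((α + γ - 1) / 2) * (ρb x) ^ ((α + γ - 1) / 2 - 1))
        - (((2 * γ / (α * (α + γ - 1))) *
            (deriv (deriv ρb) x * ((α + γ - 1) / 2) * (ρb x) ^ ((α + γ - 1) / 2 - 1)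
              + deriv ρb x * ((α + γ - 1) / 2) *
                (deriv ρb x * ((α + γ - 1) / 2 - 1) * (ρb x) ^ ((α + γ - 1) / 2 - 1 - 1))) *
            (ρb x) ^ ((γ - α - 1) / 2)
          + (2 * γ / (α * (α + γ - 1))) *
            (deriv ρb x * ((α + γ - 1) / 2) * (ρb x) ^ ((α + γ - 1) / 2 - 1)) *
            (deriv ρb x * ((γ - α - 1) / 2) * (ρb x) ^ ((γ - α - 1) / 2 - 1))) *
            ((ρ x) ^ α - (ρb x) ^ α)
          + (2 * γ / (α * (α + γ - 1))) *
            (deriv ρb x * ((α + γ - 1) / 2) * (ρb x) ^ ((α + γ - 1) / 2 - 1)) *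
            (ρb x) ^ ((γ - α - 1) / 2) *
            (deriv ρ x * α * (ρ x) ^ (α - 1) - deriv ρb x * α * (ρb x) ^ (α - 1)))) x := by
    exact (((hG.const_mul _).mul (hAb.sub hBb))).sub
      ((((hG.const_mul _).mul hBd)).mul (hAα.sub hBα))
  simp only [hGeq]
  rw [hF.deriv, (show HasDerivAt (fun y => (ρ y) ^ ((α + γ - 1) / 2) - (ρb y) ^ ((α + γ - 1) / 2)) _ x from hAb.sub hBb).deriv, hG.deriv, (show HasDerivAt (fun y => deriv ρb y * ((α + γ - 1) / 2) * (ρb y) ^ ((α + γ - 1) / 2 - 1) * (ρb y) ^ ((γ - α - 1) / 2)) _ x from hG.mul hBd).deriv]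
  have hαγ0 : α + γ - 1 ≠ 0 := sub_ne_zero.mpr hαγ
  have hApos := hρpos x
  have hBpos := hρbpos x
  have e2 : (ρb x) ^ ((α + γ - 1) / 2 - 1)
      = (ρb x) ^ ((γ - α - 1) / 2) * (ρb x) ^ (α - 1) := by
    rw [← Real.rpow_add hBpos]; congr 1; ring
  have e3 : (ρb x) ^ (γ - 1)
      = (ρb x) ^ ((γ - α - 1) / 2) * (ρb x) ^ ((γ - α - 1) / 2) * (ρb x) ^ (α - 1) * ρb x := by
    rw [show (γ - 1) = (γ - α - 1) / 2 + (γ - α - 1) / 2 + (α - 1) + 1 by ring,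
      Real.rpow_add hBpos, Real.rpow_add hBpos, Real.rpow_add hBpos, Real.rpow_one]
  have e4 : (ρ x) ^ (α - 1) = (ρ x) ^ (α - 2) * ρ x := by
    rw [show (α - 1) = (α - 2) + 1 by ring, Real.rpow_add hApos, Real.rpow_one]
  have e1 : (ρ x) ^ ((α + γ - 1) / 2 - 1) * (ρ x) ^ ((α + γ - 1) / 2 - 1)
      = (ρ x) ^ (α - 2) * (ρ x) ^ (γ - 1) := by
    rw [← Real.rpow_add hApos, ← Real.rpow_add hApos]; congr 1; ring
  rw [e2, e3, e4]
  have hsq : (deriv ρ x * ((α + γ - 1) / 2) * (ρ x) ^ ((α + γ - 1) / 2 - 1) -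
        deriv ρb x * ((α + γ - 1) / 2) *
          ((ρb x) ^ ((γ - α - 1) / 2) * (ρb x) ^ (α - 1))) ^ 2
      = ((α + γ - 1) / 2) ^ 2 *
          (((ρ x) ^ ((α + γ - 1) / 2 - 1) * (ρ x) ^ ((α + γ - 1) / 2 - 1)) * (deriv ρ x) ^ 2
            - 2 * deriv ρ x * deriv ρb x * ((ρ x) ^ ((α + γ - 1) / 2 - 1) *
                ((ρb x) ^ ((γ - α - 1) / 2) * (ρb x) ^ (α - 1)))
            + ((ρb x) ^ ((γ - α - 1) / 2) * (ρb x) ^ (α - 1)) *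
                ((ρb x) ^ ((γ - α - 1) / 2) * (ρb x) ^ (α - 1)) * (deriv ρb x) ^ 2) := by
    ring
  rw [hsq, e1]
  field_simp
  ring
end

section
/- Let f ∈ L¹(0,∞) ∩ L^∞(0,∞) be nonnegative and absolutely continuous with f' ∈ L²(0,∞). Then f(t) → 0 as t → ∞. -/
/-! The square `g = f²` is integrable on `(0, ∞)` because `f` is bounded there, and its
derivative `2 f f'` is integrable by Cauchy–Schwarz, as both `f` and `f'` lie in `L²`.
A function which is integrable on `(0, ∞)` together with its derivative tends to `0`,
so `f² → 0`, hence `f → 0`. -/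

open MeasureTheory Filter Set Topology

theorem aestronglyMeasurable_restrict_of_forall_hasDerivAt {𝕜 F : Type*} [NontriviallyNormedField 𝕜]
    [MeasurableSpace 𝕜] [OpensMeasurableSpace 𝕜] [NormedAddCommGroup F]
    [NormedSpace 𝕜 F] [CompleteSpace F] [SecondCountableTopologyEither 𝕜 F]
    {f f' : 𝕜 → F} {s : Set 𝕜} (μ : Measure 𝕜) (hs : MeasurableSet s)
    (hf : ∀ x ∈ s, HasDerivAt f (f' x) x) : AEStronglyMeasurable f' (μ.restrict s) :=
  (aestronglyMeasurable_deriv f _).congr <|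
    (ae_restrict_iff' hs).2 <| .of_forall fun x hx => (hf x hx).deriv

theorem MeasureTheory.Integrable.memLp_two_of_bound {α : Type*} [MeasurableSpace α]
    {μ : Measure α} {f : α → ℝ} (hf : Integrable f μ) {M : ℝ} (hM : ∀ᵐ x ∂μ, ‖f x‖ ≤ M) :
    MemLp f 2 μ :=
  (memLp_two_iff_integrable_sq hf.1).2 <| by simpa only [sq] using hf.mul_bdd hf.1 hM

theorem Filter.Tendsto.of_sq_tendsto_zero {α : Type*} {l : Filter α} {f : α → ℝ}
    (h : Tendsto (fun x => f x ^ 2) l (𝓝 0)) : Tendsto f l (𝓝 0) := by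
  rw [tendsto_zero_iff_abs_tendsto_zero]
  simpa only [Real.sqrt_sq_eq_abs, Real.sqrt_zero, Function.comp_def] using h.sqrt

/-- If `f : [0,∞) → [0,∞)` is differentiable with `f ∈ L¹ ∩ L^∞` and `f' ∈ L²`, then
`f(t) → 0` as `t → ∞`. -/
theorem stmt_14 (f f' : ℝ → ℝ)
    (hpos : ∀ t, 0 ≤ t → 0 ≤ f t)
    (hderiv : ∀ t, 0 ≤ t → HasDerivAt f (f' t) t)
    (hL1 : IntegrableOn f (Set.Ioi 0))
    (hbdd : ∃ M : ℝ, ∀ t, 0 ≤ t → f t ≤ M)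
    (hL2 : IntegrableOn (fun t => (f' t) ^ 2) (Set.Ioi 0)) :
    Tendsto f atTop (nhds 0) := by
  obtain ⟨M, hM⟩ := hbdd
  have hderiv' : ∀ t ∈ Ioi (0 : ℝ), HasDerivAt f (f' t) t := fun t ht => hderiv t (le_of_lt ht)
  have hf_bound : ∀ᵐ t ∂(volume.restrict (Ioi (0 : ℝ))), ‖f t‖ ≤ M :=
    (ae_restrict_iff' measurableSet_Ioi).2 <| .of_forall fun t ht => by
      rw [Real.norm_of_nonneg (hpos t (le_of_lt ht))]
      exact hM t (le_of_lt ht)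
  have hf_L2 : MemLp f 2 (volume.restrict (Ioi 0)) := hL1.memLp_two_of_bound hf_bound
  have hf'_L2 : MemLp f' 2 (volume.restrict (Ioi 0)) :=
    (memLp_two_iff_integrable_sq
      (aestronglyMeasurable_restrict_of_forall_hasDerivAt _ measurableSet_Ioi hderiv')).2 hL2
  have hsq_deriv : ∀ t ∈ Ioi (0 : ℝ), HasDerivAt (fun t => f t ^ 2) (2 * (f t * f' t)) t :=
    fun t ht => by simpa [mul_assoc] using (hderiv' t ht).fun_pow 2
  have hsq_deriv_int : IntegrableOn (fun t => 2 * (f t * f' t)) (Ioi 0) :=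
    (hf_L2.integrable_mul hf'_L2).const_mul 2
  have hsq_int : IntegrableOn (fun t => f t ^ 2) (Ioi 0) :=
    (memLp_two_iff_integrable_sq hL1.1).1 hf_L2
  exact (tendsto_zero_of_hasDerivAt_of_integrableOn_Ioi hsq_deriv hsq_deriv_int
    hsq_int).of_sq_tendsto_zero
end
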